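/- arXiv:1910.07341 — 4 statements merged into one kernel-verified Lean document; each statement's English description precedes it below -/
import Mathlib

section
/- Let E be a real inner product space, k ≥ 1, and let x₁, …, x_{2k} ∈ E be linearly independent. Define the sequence z of length 2k by z_{2i−1} = x_i and z_{2i} = x_{2k+1−i} for i = 1,…,k, and the sequence w by w_{2i−1} = x_{2k+1−i} and w_{2i} = x_i for i = 1,…,k. Let u and v be the normalized Gram–Schmidt orthonormalizations of z and w respectively (u_j is the normalization of z_j minus its orthogonal projection onto the span of z_1,…,z_{j−1}, and similarly for v). For i = 1,…,k set x^L_i = u_{2i−1}, x^R_{2k+1−i} = v_{2i−1}, and define y_i = (1/√2)·((x^L_i + x^R_{2k+1−i})/‖x^L_i + x^R_{2k+1−i}‖ + (x^L_i − x^R_{2k+1−i})/‖x^L_i − x^R_{2k+1−i}‖) and y_{2k+1−i} = (1/√2)·((x^L_i + x^R_{2k+1−i})/‖x^L_i + x^R_{2k+1−i}‖ − (x^L_i − x^R_{2k+1−i})/‖x^L_i − x^R_{2k+1−i}‖). Then: (1) (y_j)_{j=1}^{2k} is an orthonormal family; (2) for every i ≤ k, both y_i and y_{2k+1−i} are orthogonal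 to x_j and to x_{2k+1−j} for all j < i; (3) for every i ≤ k, the linear span of {x_j, x_{2k+1−j} : j ≤ i} equals the linear span of {y_j, y_{2k+1−j} : j ≤ i}; (4) if S : E →ₗ[ℝ] E satisfies S ∘ S = id, ⟪S a, b⟫ = ⟪a, S b⟫ for all a, b ∈ E, and S x_i = x_{2k+1−i} for all i = 1,…,2k, then S y_i = y_{2k+1−i} for all i = 1,…,2k. -/
open scoped RealInnerProductSpace

open InnerProductSpace

section Aux
variable {E : Type*} [NormedAddCommGroup E] [InnerProductSpace ℝ E]

lemma map_gs (S : E →ₗ[ℝ] E) (hS : ∀ a b : E, ⟪S a, S b⟫ = ⟪a, b⟫) (f g : ℕ → E) :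
    ∀ n, (∀ m ≤ n, S (f m) = g m) → S (gramSchmidt ℝ f n) = gramSchmidt ℝ g n := by
  have hnorm : ∀ a : E, ‖S a‖ = ‖a‖ := fun a => by
    rw [norm_eq_sqrt_real_inner (S a), hS, ← norm_eq_sqrt_real_inner]
  intro n
  induction n using Nat.strong_induction_on with
  | _ n ih =>
    intro h
    rw [gramSchmidt_def ℝ f n, gramSchmidt_def ℝ g n]
    simp_rw [Submodule.starProjection_singleton]
    rw [map_sub, map_sum]
    congr 1
    · exact h n le_rfl
    refine Finset.sum_congr rfl fun i hi => ?_
    have hi' : i < n := Finset.mem_Iio.mp hi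
    have hgi : S (gramSchmidt ℝ f i) = gramSchmidt ℝ g i :=
      ih i hi' (fun m hm => h m (hm.trans hi'.le))
    rw [map_smul, hgi]
    congr 1
    rw [← hgi, ← h n le_rfl, hS, hnorm]

lemma pq_aux (A B : E) (p q : ℝ) (hA : ⟪A, A⟫ = p ^ 2) (hB : ⟪B, B⟫ = q ^ 2)
    (hAB : ⟪A, B⟫ = 0) (hp : p ≠ 0) (hq : q ≠ 0) :
    ⟪(Real.sqrt 2)⁻¹ • (p⁻¹ • A + q⁻¹ • B), (Real.sqrt 2)⁻¹ • (p⁻¹ • A + q⁻¹ • B)⟫ = 1 ∧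
    ⟪(Real.sqrt 2)⁻¹ • (p⁻¹ • A + q⁻¹ • B), (Real.sqrt 2)⁻¹ • (p⁻¹ • A - q⁻¹ • B)⟫ = 0 ∧
    ⟪(Real.sqrt 2)⁻¹ • (p⁻¹ • A - q⁻¹ • B), (Real.sqrt 2)⁻¹ • (p⁻¹ • A + q⁻¹ • B)⟫ = 0 ∧
    ⟪(Real.sqrt 2)⁻¹ • (p⁻¹ • A - q⁻¹ • B), (Real.sqrt 2)⁻¹ • (p⁻¹ • A - q⁻¹ • B)⟫ = 1 := by
  have hBA : ⟪B, A⟫ = 0 := by rw [real_inner_comm]; exact hAB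
  have h2 : Real.sqrt 2 ≠ 0 := by positivity
  have hss : Real.sqrt 2 * Real.sqrt 2 = 2 := Real.mul_self_sqrt (by norm_num)
  refine ⟨?_, ?_, ?_, ?_⟩ <;>
  · simp only [real_inner_smul_left, real_inner_smul_right, inner_add_left, inner_add_right,
      inner_sub_left, inner_sub_right, hA, hB, hAB, hBA]
    field_simp
    first
    | ring1
    | linear_combination (-(p ^ 2 * q ^ 2 * Real.sqrt 2)) * hss
    | linear_combination (-(p * q)) * hss

lemma li_comp_aux (x : ℕ → E) (K : ℕ) (hli : LinearIndependent ℝ (fun i : Fin K => x i))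
    (f : ℕ → E) (σ : ℕ → ℕ) (n : ℕ) (hσ : ∀ m ≤ n, σ m < K)
    (hinj : ∀ a ≤ n, ∀ b ≤ n, σ a = σ b → a = b) (hf : ∀ m ≤ n, f m = x (σ m)) :
    LinearIndependent ℝ (f ∘ ((↑) : Set.Iic n → ℕ)) := by
  have h := hli.comp (fun m : Set.Iic n => (⟨σ m, hσ m m.2⟩ : Fin K))
    (fun a b hab => Subtype.ext (hinj a a.2 b b.2 (congrArg Fin.val hab)))
  have hfun : (f ∘ ((↑) : Set.Iic n → ℕ)) =
      ((fun i : Fin K => x i) ∘ (fun m : Set.Iic n => (⟨σ m, hσ m m.2⟩ : Fin K))) :=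
    funext fun m => hf m m.2
  rwa [hfun]

lemma gs_eq_norm_smul_normed (f : ℕ → E) (n : ℕ) (h : gramSchmidt ℝ f n ≠ 0) :
    gramSchmidt ℝ f n = ‖gramSchmidt ℝ f n‖ • gramSchmidtNormed ℝ f n := by
  rw [gramSchmidtNormed, RCLike.ofReal_real_eq_id]
  simp only [id_eq]
  rw [smul_smul, mul_inv_cancel₀ (norm_ne_zero_iff.mpr h), one_smul]

end Aux

theorem stmt4 {E : Type*} [NormedAddCommGroup E] [InnerProductSpace ℝ E]
    (k : ℕ) (hk : 1 ≤ k)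
    (x : ℕ → E) (hli : LinearIndependent ℝ (fun i : Fin (2 * k) => x i))
    (z w : ℕ → E)
    (hz : ∀ j < 2 * k, z j = if j % 2 = 0 then x (j / 2) else x (2 * k - 1 - j / 2))
    (hw : ∀ j < 2 * k, w j = if j % 2 = 0 then x (2 * k - 1 - j / 2) else x (j / 2))
    (u v : ℕ → E)
    (hu : ∀ j < 2 * k, u j = InnerProductSpace.gramSchmidtNormed ℝ z j)
    (hv : ∀ j < 2 * k, v j = InnerProductSpace.gramSchmidtNormed ℝ w j)
    (y : ℕ → E)
    (hy1 : ∀ i < k, y i = (Real.sqrt 2)⁻¹ •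
      (‖u (2 * i) + v (2 * i)‖⁻¹ • (u (2 * i) + v (2 * i))
        + ‖u (2 * i) - v (2 * i)‖⁻¹ • (u (2 * i) - v (2 * i))))
    (hy2 : ∀ i < k, y (2 * k - 1 - i) = (Real.sqrt 2)⁻¹ •
      (‖u (2 * i) + v (2 * i)‖⁻¹ • (u (2 * i) + v (2 * i))
        - ‖u (2 * i) - v (2 * i)‖⁻¹ • (u (2 * i) - v (2 * i)))) :
    Orthonormal ℝ (fun j : Fin (2 * k) => y j)
    ∧ (∀ i < k, ∀ j < i,
        ⟪y i, x j⟫ = 0 ∧ ⟪y i, x (2 * k - 1 - j)⟫ = 0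
        ∧ ⟪y (2 * k - 1 - i), x j⟫ = 0 ∧ ⟪y (2 * k - 1 - i), x (2 * k - 1 - j)⟫ = 0)
    ∧ (∀ i < k,
        Submodule.span ℝ {e : E | ∃ j ≤ i, e = x j ∨ e = x (2 * k - 1 - j)}
          = Submodule.span ℝ {e : E | ∃ j ≤ i, e = y j ∨ e = y (2 * k - 1 - j)})
    ∧ (∀ S : E →ₗ[ℝ] E, (∀ a, S (S a) = a) → (∀ a b, ⟪S a, b⟫ = ⟪a, S b⟫) →
        (∀ i < 2 * k, S (x i) = x (2 * k - 1 - i)) →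
        ∀ i < 2 * k, S (y i) = y (2 * k - 1 - i)) := by
  -- even/odd value lemmas
  have hze : ∀ m, m % 2 = 0 → m < 2 * k → z m = x (m / 2) := by
    intro m h1 h2; rw [hz m h2, if_pos h1]
  have hzo : ∀ m, m % 2 = 1 → m < 2 * k → z m = x (2 * k - 1 - m / 2) := by
    intro m h1 h2; rw [hz m h2, if_neg (by omega)]
  have hwe : ∀ m, m % 2 = 0 → m < 2 * k → w m = x (2 * k - 1 - m / 2) := by
    intro m h1 h2; rw [hw m h2, if_pos h1]
  have hwo : ∀ m, m % 2 = 1 → m < 2 * k → w m = x (m / 2) := by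
    intro m h1 h2; rw [hw m h2, if_neg (by omega)]
  have hzw_even : ∀ m, m % 2 = 0 → m + 1 < 2 * k → z m = w (m + 1) := by
    intro m h1 h2
    rw [hze m h1 (by omega), hwo (m + 1) (by omega) h2]
    congr 1; omega
  have hzw_odd : ∀ m, m % 2 = 1 → m < 2 * k → z m = w (m - 1) := by
    intro m h1 h2
    rw [hzo m h1 h2, hwe (m - 1) (by omega) (by omega)]
    congr 2; omega
  have hwz_even : ∀ m, m % 2 = 0 → m + 1 < 2 * k → w m = z (m + 1) := by
    intro m h1 h2
    rw [hwe m h1 (by omega), hzo (m + 1) (by omega) h2]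
    congr 2; omega
  have hwz_odd : ∀ m, m % 2 = 1 → m < 2 * k → w m = z (m - 1) := by
    intro m h1 h2
    rw [hwo m h1 h2, hze (m - 1) (by omega) (by omega)]
    congr 1; omega
  -- image transfer
  have hz_in_w : ∀ i ≤ k, ∀ m < 2 * i, z m ∈ w '' Set.Iio (2 * i) := by
    intro i hi m hm
    rcases Nat.even_or_odd m with he | ho
    · have h1 : m % 2 = 0 := Nat.even_iff.mp he
      exact ⟨m + 1, Set.mem_Iio.mpr (by omega), (hzw_even m h1 (by omega)).symm⟩
    · have h1 : m % 2 = 1 := Nat.odd_iff.mp ho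
      exact ⟨m - 1, Set.mem_Iio.mpr (by omega), (hzw_odd m h1 (by omega)).symm⟩
  have hw_in_z : ∀ i ≤ k, ∀ m < 2 * i, w m ∈ z '' Set.Iio (2 * i) := by
    intro i hi m hm
    rcases Nat.even_or_odd m with he | ho
    · have h1 : m % 2 = 0 := Nat.even_iff.mp he
      exact ⟨m + 1, Set.mem_Iio.mpr (by omega), (hwz_even m h1 (by omega)).symm⟩
    · have h1 : m % 2 = 1 := Nat.odd_iff.mp ho
      exact ⟨m - 1, Set.mem_Iio.mpr (by omega), (hwz_odd m h1 (by omega)).symm⟩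
  -- linear independence of initial segments
  have hliz : ∀ n < 2 * k, LinearIndependent ℝ (z ∘ ((↑) : Set.Iic n → ℕ)) := by
    intro n hn
    refine li_comp_aux x (2 * k) hli z
      (fun m => if m % 2 = 0 then m / 2 else 2 * k - 1 - m / 2) n
      (fun m hm => by split <;> omega)
      (fun a ha b hb h => by split_ifs at h <;> omega)
      (fun m hm => by rw [hz m (by omega)]; exact (apply_ite x _ _ _).symm)
  have hliw : ∀ n < 2 * k, LinearIndependent ℝ (w ∘ ((↑) : Set.Iic n → ℕ)) := by
    intro n hn
    refine li_comp_aux x (2 * k) hli w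
      (fun m => if m % 2 = 0 then 2 * k - 1 - m / 2 else m / 2) n
      (fun m hm => by split <;> omega)
      (fun a ha b hb h => by split_ifs at h <;> omega)
      (fun m hm => by rw [hw m (by omega)]; exact (apply_ite x _ _ _).symm)
  have hgz_ne : ∀ m < 2 * k, gramSchmidt ℝ z m ≠ 0 :=
    fun m hm => gramSchmidt_ne_zero_coe m (hliz m hm)
  have hgw_ne : ∀ m < 2 * k, gramSchmidt ℝ w m ≠ 0 :=
    fun m hm => gramSchmidt_ne_zero_coe m (hliw m hm)
  -- orthogonality to earlier spans
  have horthz : ∀ m : ℕ, ∀ c ∈ Submodule.span ℝ (z '' Set.Iio m),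
      ⟪gramSchmidt ℝ z m, c⟫ = 0 := by
    intro m c hc
    rw [← span_gramSchmidt_Iio ℝ z m] at hc
    have hle : Submodule.span ℝ (gramSchmidt ℝ z '' Set.Iio m) ≤ (ℝ ∙ gramSchmidt ℝ z m)ᗮ := by
      rw [Submodule.span_le]
      rintro _ ⟨i, hi, rfl⟩
      rw [SetLike.mem_coe, Submodule.mem_orthogonal_singleton_iff_inner_right]
      exact gramSchmidt_orthogonal ℝ z (Set.mem_Iio.mp hi).ne'
    exact Submodule.mem_orthogonal_singleton_iff_inner_right.mp (hle hc)
  have horthw : ∀ m : ℕ, ∀ c ∈ Submodule.span ℝ (w '' Set.Iio m),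
      ⟪gramSchmidt ℝ w m, c⟫ = 0 := by
    intro m c hc
    rw [← span_gramSchmidt_Iio ℝ w m] at hc
    have hle : Submodule.span ℝ (gramSchmidt ℝ w '' Set.Iio m) ≤ (ℝ ∙ gramSchmidt ℝ w m)ᗮ := by
      rw [Submodule.span_le]
      rintro _ ⟨i, hi, rfl⟩
      rw [SetLike.mem_coe, Submodule.mem_orthogonal_singleton_iff_inner_right]
      exact gramSchmidt_orthogonal ℝ w (Set.mem_Iio.mp hi).ne'
    exact Submodule.mem_orthogonal_singleton_iff_inner_right.mp (hle hc)
  have hUorth : ∀ m < 2 * k, ∀ c ∈ Submodule.span ℝ (z '' Set.Iio m), ⟪u m, c⟫ = 0 := by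
    intro m hm c hc
    rw [hu m hm, gramSchmidtNormed, real_inner_smul_left, horthz m c hc, mul_zero]
  have hVorth : ∀ m < 2 * k, ∀ c ∈ Submodule.span ℝ (w '' Set.Iio m), ⟪v m, c⟫ = 0 := by
    intro m hm c hc
    rw [hv m hm, gramSchmidtNormed, real_inner_smul_left, horthw m c hc, mul_zero]
  -- membership of u, v in spans
  have hUmem : ∀ m < 2 * k, u m ∈ Submodule.span ℝ (z '' Set.Iic m) := by
    intro m hm
    rw [hu m hm, gramSchmidtNormed]
    exact Submodule.smul_mem _ _ (gramSchmidt_mem_span ℝ z le_rfl)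
  have hVmem : ∀ m < 2 * k, v m ∈ Submodule.span ℝ (w '' Set.Iic m) := by
    intro m hm
    rw [hv m hm, gramSchmidtNormed]
    exact Submodule.smul_mem _ _ (gramSchmidt_mem_span ℝ w le_rfl)
  have hIic_zw : ∀ i j : ℕ, i < j → j ≤ k →
      Submodule.span ℝ (z '' Set.Iic (2 * i)) ≤ Submodule.span ℝ (w '' Set.Iio (2 * j)) := by
    intro i j hij hj
    rw [Submodule.span_le]
    rintro _ ⟨m, hm, rfl⟩
    exact Submodule.subset_span (hz_in_w j hj m (by have := Set.mem_Iic.mp hm; omega))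
  have hIic_wz : ∀ i j : ℕ, i < j → j ≤ k →
      Submodule.span ℝ (w '' Set.Iic (2 * i)) ≤ Submodule.span ℝ (z '' Set.Iio (2 * j)) := by
    intro i j hij hj
    rw [Submodule.span_le]
    rintro _ ⟨m, hm, rfl⟩
    exact Submodule.subset_span (hw_in_z j hj m (by have := Set.mem_Iic.mp hm; omega))
  -- inner product table
  have hUV : ∀ i < k, ∀ j < k, i ≠ j → ⟪u (2 * i), v (2 * j)⟫ = 0 := by
    intro i hi j hj hij
    rcases lt_or_gt_of_ne hij with h | h
    · rw [real_inner_comm]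
      exact hVorth (2 * j) (by omega) _ (hIic_zw i j h hj.le (hUmem (2 * i) (by omega)))
    · exact hUorth (2 * i) (by omega) _ (hIic_wz j i h hi.le (hVmem (2 * j) (by omega)))
  have hUU : ∀ i < k, ∀ j < k, i ≠ j → ⟪u (2 * i), u (2 * j)⟫ = 0 := by
    intro i hi j hj hij
    rw [hu _ (by omega : 2 * i < 2 * k), hu _ (by omega : 2 * j < 2 * k),
      gramSchmidtNormed, gramSchmidtNormed, real_inner_smul_left, real_inner_smul_right,
      gramSchmidt_orthogonal ℝ z (show 2 * i ≠ 2 * j by omega)]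
    ring
  have hVV : ∀ i < k, ∀ j < k, i ≠ j → ⟪v (2 * i), v (2 * j)⟫ = 0 := by
    intro i hi j hj hij
    rw [hv _ (by omega : 2 * i < 2 * k), hv _ (by omega : 2 * j < 2 * k),
      gramSchmidtNormed, gramSchmidtNormed, real_inner_smul_left, real_inner_smul_right,
      gramSchmidt_orthogonal ℝ w (show 2 * i ≠ 2 * j by omega)]
    ring
  have hUdiag : ∀ i < k, ⟪u (2 * i), u (2 * i)⟫ = 1 := by
    intro i hi
    have h1 : ‖u (2 * i)‖ = 1 := by
      rw [hu _ (by omega : 2 * i < 2 * k)]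
      exact gramSchmidtNormed_unit_length_coe _ (hliz _ (by omega))
    rw [real_inner_self_eq_norm_sq, h1]; norm_num
  have hVdiag : ∀ i < k, ⟪v (2 * i), v (2 * i)⟫ = 1 := by
    intro i hi
    have h1 : ‖v (2 * i)‖ = 1 := by
      rw [hv _ (by omega : 2 * i < 2 * k)]
      exact gramSchmidtNormed_unit_length_coe _ (hliw _ (by omega))
    rw [real_inner_self_eq_norm_sq, h1]; norm_num
  -- v (2i) is not in the span of z-values up to 2i
  have hVnot : ∀ i < k, v (2 * i) ∉ Submodule.span ℝ (z '' Set.Iic (2 * i)) := by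
    intro i hi hmem
    have hginv : gramSchmidt ℝ w (2 * i) = ‖gramSchmidt ℝ w (2 * i)‖ • v (2 * i) := by
      rw [hv _ (by omega : 2 * i < 2 * k)]
      exact gs_eq_norm_smul_normed w (2 * i) (hgw_ne _ (by omega))
    have hg : gramSchmidt ℝ w (2 * i) ∈ Submodule.span ℝ (z '' Set.Iic (2 * i)) := by
      rw [hginv]; exact Submodule.smul_mem _ _ hmem
    have hwlt : Submodule.span ℝ (w '' Set.Iio (2 * i)) ≤
        Submodule.span ℝ (z '' Set.Iic (2 * i)) := by
      rw [Submodule.span_le]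
      rintro _ ⟨m, hm, rfl⟩
      exact Submodule.subset_span
        (Set.image_mono Set.Iio_subset_Iic_self (hw_in_z i hi.le m (Set.mem_Iio.mp hm)))
    have hx' : x (2 * k - 1 - i) ∈ Submodule.span ℝ (z '' Set.Iic (2 * i)) := by
      have h20 : w (2 * i) ∈ Submodule.span ℝ (gramSchmidt ℝ w '' Set.Iic (2 * i)) :=
        mem_span_gramSchmidt ℝ w le_rfl
      have hsub : Submodule.span ℝ (gramSchmidt ℝ w '' Set.Iic (2 * i)) ≤
          Submodule.span ℝ (z '' Set.Iic (2 * i)) := by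
        rw [Submodule.span_le]
        rintro _ ⟨m, hm, rfl⟩
        rcases eq_or_lt_of_le (Set.mem_Iic.mp hm) with rfl | hlt
        · exact hg
        · refine hwlt ?_
          refine Submodule.span_mono (Set.image_mono ?_) (gramSchmidt_mem_span ℝ w le_rfl)
          exact fun t ht => lt_of_le_of_lt ht hlt
      have h21 := hsub h20
      rwa [hwe (2 * i) (by omega) (by omega), show 2 * i / 2 = i by omega] at h21
    have hT : Submodule.span ℝ (z '' Set.Iic (2 * i)) ≤
        Submodule.span ℝ ((fun t : Fin (2 * k) => x t) '' {t : Fin (2 * k) | (t : ℕ) ≠ 2 * k - 1 - i}) := by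
      rw [Submodule.span_le]
      rintro _ ⟨m, hm, rfl⟩
      have hm' := Set.mem_Iic.mp hm
      apply Submodule.subset_span
      rcases Nat.even_or_odd m with he | ho
      · have h1 : m % 2 = 0 := Nat.even_iff.mp he
        exact ⟨⟨m / 2, by omega⟩, by simp only [Set.mem_setOf_eq]; omega,
          (hze m h1 (by omega)).symm⟩
      · have h1 : m % 2 = 1 := Nat.odd_iff.mp ho
        exact ⟨⟨2 * k - 1 - m / 2, by omega⟩, by simp only [Set.mem_setOf_eq]; omega,
          (hzo m h1 (by omega)).symm⟩
    have hnm := hli.notMem_span_image (s := {t : Fin (2 * k) | (t : ℕ) ≠ 2 * k - 1 - i})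
      (x := (⟨2 * k - 1 - i, by omega⟩ : Fin (2 * k))) (by simp)
    exact hnm (hT hx')
  have hUVne : ∀ i < k, u (2 * i) + v (2 * i) ≠ 0 ∧ u (2 * i) - v (2 * i) ≠ 0 := by
    intro i hi
    have hUm := hUmem (2 * i) (by omega)
    constructor
    · intro h
      apply hVnot i hi
      have hv' : v (2 * i) = -u (2 * i) := by
        rw [eq_neg_iff_add_eq_zero, add_comm]; exact h
      rw [hv']; exact Submodule.neg_mem _ hUm
    · intro h
      apply hVnot i hi
      have hv' : v (2 * i) = u (2 * i) := ((sub_eq_zero.mp h).symm)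
      rw [hv']; exact hUm
  have hpq : ∀ i < k, ‖u (2 * i) + v (2 * i)‖ ≠ 0 ∧ ‖u (2 * i) - v (2 * i)‖ ≠ 0 := fun i hi =>
    ⟨norm_ne_zero_iff.mpr (hUVne i hi).1, norm_ne_zero_iff.mpr (hUVne i hi).2⟩
  have hAB0 : ∀ i < k, ⟪u (2 * i) + v (2 * i), u (2 * i) - v (2 * i)⟫ = 0 := by
    intro i hi
    simp only [inner_add_left, inner_sub_right, hUdiag i hi, hVdiag i hi]
    rw [real_inner_comm (v (2 * i)) (u (2 * i))]
    ring
  -- full y inner product table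
  have hy_inner : ∀ i < k, ∀ j < k,
      (⟪y i, y j⟫ = if i = j then (1 : ℝ) else 0) ∧
      (⟪y i, y (2 * k - 1 - j)⟫ = 0) ∧
      (⟪y (2 * k - 1 - i), y j⟫ = 0) ∧
      (⟪y (2 * k - 1 - i), y (2 * k - 1 - j)⟫ = if i = j then (1 : ℝ) else 0) := by
    intro i hi j hj
    by_cases hij : i = j
    · subst hij
      simp only [if_pos rfl]
      obtain ⟨h1, h2, h3, h4⟩ := pq_aux (u (2 * i) + v (2 * i)) (u (2 * i) - v (2 * i))
        ‖u (2 * i) + v (2 * i)‖ ‖u (2 * i) - v (2 * i)‖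
        (real_inner_self_eq_norm_sq _) (real_inner_self_eq_norm_sq _)
        (hAB0 i hi) (hpq i hi).1 (hpq i hi).2
      rw [hy1 i hi, hy2 i hi]
      exact ⟨h1, h2, h3, h4⟩
    · simp only [if_neg hij]
      have t1 := hUU i hi j hj hij
      have t2 := hVV i hi j hj hij
      have t3 := hUV i hi j hj hij
      have t4 : ⟪v (2 * i), u (2 * j)⟫ = 0 := by
        rw [real_inner_comm]; exact hUV j hj i hi (Ne.symm hij)
      refine ⟨?_, ?_, ?_, ?_⟩ <;>
      · simp only [hy1 i hi, hy1 j hj, hy2 i hi, hy2 j hj, real_inner_smul_left,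
          real_inner_smul_right, inner_add_left, inner_add_right, inner_sub_left,
          inner_sub_right, t1, t2, t3, t4]
        ring
  -- main part 1
  have hmain1 : Orthonormal ℝ (fun j : Fin (2 * k) => y j) := by
    rw [orthonormal_iff_ite]
    intro a b
    have ha2 : (a : ℕ) < 2 * k := a.2
    have hb2 : (b : ℕ) < 2 * k := b.2
    rcases lt_or_ge (a : ℕ) k with hak | hak <;> rcases lt_or_ge (b : ℕ) k with hbk | hbk
    · rw [(hy_inner (a : ℕ) hak (b : ℕ) hbk).1]
      exact if_congr (Fin.val_eq_val a b) rfl rfl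
    · rw [show ((b : ℕ)) = 2 * k - 1 - (2 * k - 1 - (b : ℕ)) from by omega,
        (hy_inner (a : ℕ) hak (2 * k - 1 - (b : ℕ)) (by omega)).2.1,
        if_neg (by intro h; rw [Fin.ext_iff] at h; omega)]
    · rw [show ((a : ℕ)) = 2 * k - 1 - (2 * k - 1 - (a : ℕ)) from by omega,
        (hy_inner (2 * k - 1 - (a : ℕ)) (by omega) (b : ℕ) hbk).2.2.1,
        if_neg (by intro h; rw [Fin.ext_iff] at h; omega)]
    · rw [show ((a : ℕ)) = 2 * k - 1 - (2 * k - 1 - (a : ℕ)) from by omega,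
        show ((b : ℕ)) = 2 * k - 1 - (2 * k - 1 - (b : ℕ)) from by omega,
        (hy_inner (2 * k - 1 - (a : ℕ)) (by omega) (2 * k - 1 - (b : ℕ)) (by omega)).2.2.2]
      exact if_congr (by rw [Fin.ext_iff]; omega) rfl rfl
  -- main part 2
  have hmain2 : ∀ i < k, ∀ j < i,
      ⟪y i, x j⟫ = 0 ∧ ⟪y i, x (2 * k - 1 - j)⟫ = 0
      ∧ ⟪y (2 * k - 1 - i), x j⟫ = 0 ∧ ⟪y (2 * k - 1 - i), x (2 * k - 1 - j)⟫ = 0 := by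
    intro i hi j hj
    have hxz1 : x j ∈ Submodule.span ℝ (z '' Set.Iio (2 * i)) := by
      refine Submodule.subset_span ⟨2 * j, Set.mem_Iio.mpr (by omega), ?_⟩
      rw [hze (2 * j) (by omega) (by omega)]
      congr 1; omega
    have hxz2 : x (2 * k - 1 - j) ∈ Submodule.span ℝ (z '' Set.Iio (2 * i)) := by
      refine Submodule.subset_span ⟨2 * j + 1, Set.mem_Iio.mpr (by omega), ?_⟩
      rw [hzo (2 * j + 1) (by omega) (by omega)]
      congr 2; omega
    have hxw1 : x j ∈ Submodule.span ℝ (w '' Set.Iio (2 * i)) := by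
      refine Submodule.subset_span ⟨2 * j + 1, Set.mem_Iio.mpr (by omega), ?_⟩
      rw [hwo (2 * j + 1) (by omega) (by omega)]
      congr 1; omega
    have hxw2 : x (2 * k - 1 - j) ∈ Submodule.span ℝ (w '' Set.Iio (2 * i)) := by
      refine Submodule.subset_span ⟨2 * j, Set.mem_Iio.mpr (by omega), ?_⟩
      rw [hwe (2 * j) (by omega) (by omega)]
      congr 2; omega
    have h1 := hUorth (2 * i) (by omega) _ hxz1
    have h2 := hUorth (2 * i) (by omega) _ hxz2
    have h3 := hVorth (2 * i) (by omega) _ hxw1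
    have h4 := hVorth (2 * i) (by omega) _ hxw2
    refine ⟨?_, ?_, ?_, ?_⟩ <;>
    · simp only [hy1 i hi, hy2 i hi, real_inner_smul_left, inner_add_left, inner_sub_left,
        h1, h2, h3, h4]
      ring
  -- main part 3
  have hmain3 : ∀ i < k,
      Submodule.span ℝ {e : E | ∃ j ≤ i, e = x j ∨ e = x (2 * k - 1 - j)}
        = Submodule.span ℝ {e : E | ∃ j ≤ i, e = y j ∨ e = y (2 * k - 1 - j)} := by
    intro i hi
    have hs0 : Real.sqrt 2 ≠ 0 := by positivity
    apply le_antisymm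
    · rw [Submodule.span_le]
      rintro e ⟨j, hj, he⟩
      have hclaim : ∀ j', j' ≤ i →
          x j' ∈ Submodule.span ℝ {e : E | ∃ j ≤ i, e = y j ∨ e = y (2 * k - 1 - j)} ∧
          x (2 * k - 1 - j') ∈ Submodule.span ℝ {e : E | ∃ j ≤ i, e = y j ∨ e = y (2 * k - 1 - j)} := by
        intro j'
        induction j' using Nat.strong_induction_on with
        | _ j' ih =>
          intro hj'
          have hj2 : 2 * j' < 2 * k := by omega
          have hyj : y j' ∈ Submodule.span ℝ {e : E | ∃ j ≤ i, e = y j ∨ e = y (2 * k - 1 - j)} :=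
            Submodule.subset_span ⟨j', hj', Or.inl rfl⟩
          have hyj' : y (2 * k - 1 - j') ∈
              Submodule.span ℝ {e : E | ∃ j ≤ i, e = y j ∨ e = y (2 * k - 1 - j)} :=
            Submodule.subset_span ⟨j', hj', Or.inr rfl⟩
          have hp := (hpq j' (by omega)).1
          have hq := (hpq j' (by omega)).2
          have e1 : y j' + y (2 * k - 1 - j') =
              (2 * (Real.sqrt 2)⁻¹ * ‖u (2 * j') + v (2 * j')‖⁻¹) • (u (2 * j') + v (2 * j')) := by
            rw [hy1 j' (by omega), hy2 j' (by omega)]; module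
          have e2 : y j' - y (2 * k - 1 - j') =
              (2 * (Real.sqrt 2)⁻¹ * ‖u (2 * j') - v (2 * j')‖⁻¹) • (u (2 * j') - v (2 * j')) := by
            rw [hy1 j' (by omega), hy2 j' (by omega)]; module
          have hc1 : (2 * (Real.sqrt 2)⁻¹ * ‖u (2 * j') + v (2 * j')‖⁻¹) ≠ 0 :=
            mul_ne_zero (mul_ne_zero two_ne_zero (inv_ne_zero hs0)) (inv_ne_zero hp)
          have hc2 : (2 * (Real.sqrt 2)⁻¹ * ‖u (2 * j') - v (2 * j')‖⁻¹) ≠ 0 :=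
            mul_ne_zero (mul_ne_zero two_ne_zero (inv_ne_zero hs0)) (inv_ne_zero hq)
          have hAmem : u (2 * j') + v (2 * j') ∈
              Submodule.span ℝ {e : E | ∃ j ≤ i, e = y j ∨ e = y (2 * k - 1 - j)} := by
            have hrw : u (2 * j') + v (2 * j') =
                (2 * (Real.sqrt 2)⁻¹ * ‖u (2 * j') + v (2 * j')‖⁻¹)⁻¹ •
                  (y j' + y (2 * k - 1 - j')) := by
              rw [e1, smul_smul, inv_mul_cancel₀ hc1, one_smul]
            rw [hrw]; exact Submodule.smul_mem _ _ (Submodule.add_mem _ hyj hyj')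
          have hBmem : u (2 * j') - v (2 * j') ∈
              Submodule.span ℝ {e : E | ∃ j ≤ i, e = y j ∨ e = y (2 * k - 1 - j)} := by
            have hrw : u (2 * j') - v (2 * j') =
                (2 * (Real.sqrt 2)⁻¹ * ‖u (2 * j') - v (2 * j')‖⁻¹)⁻¹ •
                  (y j' - y (2 * k - 1 - j')) := by
              rw [e2, smul_smul, inv_mul_cancel₀ hc2, one_smul]
            rw [hrw]; exact Submodule.smul_mem _ _ (Submodule.sub_mem _ hyj hyj')
          have hUY : u (2 * j') ∈
              Submodule.span ℝ {e : E | ∃ j ≤ i, e = y j ∨ e = y (2 * k - 1 - j)} := by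
            have hrw : u (2 * j') = (2 : ℝ)⁻¹ •
                ((u (2 * j') + v (2 * j')) + (u (2 * j') - v (2 * j'))) := by module
            rw [hrw]; exact Submodule.smul_mem _ _ (Submodule.add_mem _ hAmem hBmem)
          have hVY : v (2 * j') ∈
              Submodule.span ℝ {e : E | ∃ j ≤ i, e = y j ∨ e = y (2 * k - 1 - j)} := by
            have hrw : v (2 * j') = (2 : ℝ)⁻¹ •
                ((u (2 * j') + v (2 * j')) - (u (2 * j') - v (2 * j'))) := by module
            rw [hrw]; exact Submodule.smul_mem _ _ (Submodule.sub_mem _ hAmem hBmem)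
          have hearly : ∀ m < 2 * j',
              z m ∈ Submodule.span ℝ {e : E | ∃ j ≤ i, e = y j ∨ e = y (2 * k - 1 - j)} ∧
              w m ∈ Submodule.span ℝ {e : E | ∃ j ≤ i, e = y j ∨ e = y (2 * k - 1 - j)} := by
            intro m hm
            rcases Nat.even_or_odd m with he' | ho'
            · have h1 : m % 2 = 0 := Nat.even_iff.mp he'
              constructor
              · rw [hze m h1 (by omega)]; exact (ih (m / 2) (by omega) (by omega)).1
              · rw [hwe m h1 (by omega)]; exact (ih (m / 2) (by omega) (by omega)).2
            · have h1 : m % 2 = 1 := Nat.odd_iff.mp ho'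
              constructor
              · rw [hzo m h1 (by omega)]; exact (ih (m / 2) (by omega) (by omega)).2
              · rw [hwo m h1 (by omega)]; exact (ih (m / 2) (by omega) (by omega)).1
          constructor
          · have hxz : x j' ∈ Submodule.span ℝ (gramSchmidt ℝ z '' Set.Iic (2 * j')) := by
              have hm := mem_span_gramSchmidt ℝ z (le_refl (2 * j'))
              rwa [hze (2 * j') (by omega) hj2, show 2 * j' / 2 = j' by omega] at hm
            refine Submodule.span_le.mpr ?_ hxz
            rintro _ ⟨m, hm, rfl⟩
            rcases eq_or_lt_of_le (Set.mem_Iic.mp hm) with rfl | hlt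
            · have hrw : gramSchmidt ℝ z (2 * j') = ‖gramSchmidt ℝ z (2 * j')‖ • u (2 * j') := by
                rw [hu _ hj2]
                exact gs_eq_norm_smul_normed z (2 * j') (hgz_ne _ hj2)
              rw [SetLike.mem_coe, hrw]
              exact Submodule.smul_mem _ _ hUY
            · have hmm : gramSchmidt ℝ z m ∈ Submodule.span ℝ (z '' Set.Iic m) :=
                gramSchmidt_mem_span ℝ z le_rfl
              refine Submodule.span_le.mpr ?_ hmm
              rintro _ ⟨m', hm', rfl⟩
              exact (hearly m' (by have := Set.mem_Iic.mp hm'; omega)).1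
          · have hxw : x (2 * k - 1 - j') ∈
                Submodule.span ℝ (gramSchmidt ℝ w '' Set.Iic (2 * j')) := by
              have hm := mem_span_gramSchmidt ℝ w (le_refl (2 * j'))
              rwa [hwe (2 * j') (by omega) hj2, show 2 * j' / 2 = j' by omega] at hm
            refine Submodule.span_le.mpr ?_ hxw
            rintro _ ⟨m, hm, rfl⟩
            rcases eq_or_lt_of_le (Set.mem_Iic.mp hm) with rfl | hlt
            · have hrw : gramSchmidt ℝ w (2 * j') = ‖gramSchmidt ℝ w (2 * j')‖ • v (2 * j') := by
                rw [hv _ hj2]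
                exact gs_eq_norm_smul_normed w (2 * j') (hgw_ne _ hj2)
              rw [SetLike.mem_coe, hrw]
              exact Submodule.smul_mem _ _ hVY
            · have hmm : gramSchmidt ℝ w m ∈ Submodule.span ℝ (w '' Set.Iic m) :=
                gramSchmidt_mem_span ℝ w le_rfl
              refine Submodule.span_le.mpr ?_ hmm
              rintro _ ⟨m', hm', rfl⟩
              exact (hearly m' (by have := Set.mem_Iic.mp hm'; omega)).2
      rcases he with rfl | rfl
      · exact (hclaim j hj).1
      · exact (hclaim j hj).2
    · rw [Submodule.span_le]
      rintro e ⟨j, hj, he⟩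
      have hjk : j < k := by omega
      have hzX : ∀ m ≤ 2 * j,
          z m ∈ Submodule.span ℝ {e : E | ∃ j' ≤ i, e = x j' ∨ e = x (2 * k - 1 - j')} ∧
          w m ∈ Submodule.span ℝ {e : E | ∃ j' ≤ i, e = x j' ∨ e = x (2 * k - 1 - j')} := by
        intro m hm
        rcases Nat.even_or_odd m with he' | ho'
        · have h1 : m % 2 = 0 := Nat.even_iff.mp he'
          constructor
          · rw [hze m h1 (by omega)]
            exact Submodule.subset_span ⟨m / 2, by omega, Or.inl rfl⟩
          · rw [hwe m h1 (by omega)]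
            exact Submodule.subset_span ⟨m / 2, by omega, Or.inr rfl⟩
        · have h1 : m % 2 = 1 := Nat.odd_iff.mp ho'
          constructor
          · rw [hzo m h1 (by omega)]
            exact Submodule.subset_span ⟨m / 2, by omega, Or.inr rfl⟩
          · rw [hwo m h1 (by omega)]
            exact Submodule.subset_span ⟨m / 2, by omega, Or.inl rfl⟩
      have hUX : u (2 * j) ∈
          Submodule.span ℝ {e : E | ∃ j' ≤ i, e = x j' ∨ e = x (2 * k - 1 - j')} := by
        refine Submodule.span_le.mpr ?_ (hUmem (2 * j) (by omega))
        rintro _ ⟨m, hm, rfl⟩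
        exact (hzX m (Set.mem_Iic.mp hm)).1
      have hVX : v (2 * j) ∈
          Submodule.span ℝ {e : E | ∃ j' ≤ i, e = x j' ∨ e = x (2 * k - 1 - j')} := by
        refine Submodule.span_le.mpr ?_ (hVmem (2 * j) (by omega))
        rintro _ ⟨m, hm, rfl⟩
        exact (hzX m (Set.mem_Iic.mp hm)).2
      rcases he with rfl | rfl
      · rw [hy1 j hjk]
        exact Submodule.smul_mem _ _ (Submodule.add_mem _
          (Submodule.smul_mem _ _ (Submodule.add_mem _ hUX hVX))
          (Submodule.smul_mem _ _ (Submodule.sub_mem _ hUX hVX)))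
      · rw [hy2 j hjk]
        exact Submodule.smul_mem _ _ (Submodule.sub_mem _
          (Submodule.smul_mem _ _ (Submodule.add_mem _ hUX hVX))
          (Submodule.smul_mem _ _ (Submodule.sub_mem _ hUX hVX)))
  -- main part 4
  have hmain4 : ∀ S : E →ₗ[ℝ] E, (∀ a, S (S a) = a) → (∀ a b, ⟪S a, b⟫ = ⟪a, S b⟫) →
      (∀ i < 2 * k, S (x i) = x (2 * k - 1 - i)) →
      ∀ i < 2 * k, S (y i) = y (2 * k - 1 - i) := by
    intro S hS2 hsym hSx
    have hSinn : ∀ a b, ⟪S a, S b⟫ = ⟪a, b⟫ := fun a b => by rw [hsym, hS2]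
    have hSzw : ∀ m < 2 * k, S (z m) = w m := by
      intro m hm
      rcases Nat.even_or_odd m with he | ho
      · have h1 : m % 2 = 0 := Nat.even_iff.mp he
        rw [hze m h1 hm, hwe m h1 hm, hSx _ (by omega)]
      · have h1 : m % 2 = 1 := Nat.odd_iff.mp ho
        rw [hzo m h1 hm, hwo m h1 hm, hSx _ (by omega)]
        congr 1; omega
    have hSu : ∀ m < 2 * k, S (u m) = v m := by
      intro m hm
      have hg : S (gramSchmidt ℝ z m) = gramSchmidt ℝ w m :=
        map_gs S hSinn z w m (fun m' hm' => hSzw m' (lt_of_le_of_lt hm' hm))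
      have hnm : ‖gramSchmidt ℝ z m‖ = ‖gramSchmidt ℝ w m‖ := by
        rw [← hg, norm_eq_sqrt_real_inner (S _), hSinn, ← norm_eq_sqrt_real_inner]
      rw [hu m hm, hv m hm, gramSchmidtNormed, gramSchmidtNormed, map_smul, hg, hnm]
    have hSv : ∀ m < 2 * k, S (v m) = u m := fun m hm => by rw [← hSu m hm, hS2]
    have hlt : ∀ i < k, S (y i) = y (2 * k - 1 - i) := by
      intro i hik
      rw [hy1 i hik, hy2 i hik]
      rw [map_smul, map_add, map_smul, map_smul, map_add, map_sub,
        hSu _ (by omega : 2 * i < 2 * k), hSv _ (by omega : 2 * i < 2 * k)]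
      module
    intro i hi
    rcases lt_or_ge i k with hik | hik
    · exact hlt i hik
    · have h1 := hlt (2 * k - 1 - i) (by omega)
      rw [show 2 * k - 1 - (2 * k - 1 - i) = i by omega] at h1
      rw [← h1, hS2]
  exact ⟨hmain1, hmain2, hmain3, hmain4⟩
end

section
/- Let E be a real inner product space, k ≥ 1, and let x₁, …, x_{2k+1} ∈ E be linearly independent. Define the sequence z of length 2k+1 by z_{2i−1} = x_i and z_{2i} = x_{2k+2−i} for i = 1,…,k, and z_{2k+1} = x_{k+1}; define the sequence w of length 2k by w_{2i−1} = x_{2k+2−i} and w_{2i} = x_i for i = 1,…,k. Let u and v be the normalized Gram–Schmidt orthonormalizations of z and w respectively. For i = 1,…,k set x^L_i = u_{2i−1} and x^R_{2k+2−i} = v_{2i−1}, define y_i = (1/√2)·((x^L_i + x^R_{2k+2−i})/‖x^L_i + x^R_{2k+2−i}‖ + (x^L_i − x^R_{2k+2−i})/‖x^L_i − x^R_{2k+2−i}‖) and y_{2k+2−i} = (1/√2)·((x^L_i + x^R_{2k+2−i})/‖x^L_i + x^R_{2k+2−i}‖ − (x^L_i − x^R_{2k+2−i})/‖x^L_i −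 x^R_{2k+2−i}‖), and set y_{k+1} = u_{2k+1}. Then: (1) (y_j)_{j=1}^{2k+1} is an orthonormal family, and for every i ≤ k the vectors y_i and y_{2k+2−i} are orthogonal to x_j and x_{2k+2−j} for all j < i; (2) for every i ≤ k, the linear span of {x_j, x_{2k+2−j} : j ≤ i} equals the linear span of {y_j, y_{2k+2−j} : j ≤ i}; (3) if S : E →ₗ[ℝ] E satisfies S ∘ S = id, ⟪S a, b⟫ = ⟪a, S b⟫ for all a, b, S x_i = x_{2k+2−i} for i = 1,…,k, and S x_{k+1} = x_{k+1}, then S y_i = y_{2k+2−i} for i = 1,…,k and S y_{k+1} = y_{k+1}. -/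
open scoped RealInnerProductSpace

open InnerProductSpace

section Aux
variable {E : Type*} [NormedAddCommGroup E] [InnerProductSpace ℝ E]

lemma aux_mem_orth_span {s : Set E} {v : E} (h : ∀ u ∈ s, ⟪u, v⟫ = 0) :
    v ∈ (Submodule.span ℝ s)ᗮ := by
  rw [Submodule.mem_orthogonal]
  intro u hu
  induction hu using Submodule.span_induction with
  | mem _ h' => exact h _ h'
  | zero => simp
  | add _ _ _ _ h1 h2 => rw [inner_add_left, h1, h2, add_zero]
  | smul c _ _ h1 => rw [real_inner_smul_left, h1, mul_zero]

lemma aux_gs_orth (f : ℕ → E) (n : ℕ) :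
    gramSchmidt ℝ f n ∈ (Submodule.span ℝ (f '' Set.Iio n))ᗮ := by
  rw [← span_gramSchmidt_Iio ℝ f n]
  apply aux_mem_orth_span
  rintro u ⟨m, hm, rfl⟩
  exact gramSchmidt_orthogonal ℝ f (ne_of_lt hm)

lemma aux_gs_diff (f : ℕ → E) (n : ℕ) :
    f n - gramSchmidt ℝ f n ∈ Submodule.span ℝ (f '' Set.Iio n) := by
  rw [← span_gramSchmidt_Iio ℝ f n, gramSchmidt_def ℝ f n, sub_sub_cancel]
  apply Submodule.sum_mem
  intro m hm
  have h1 : gramSchmidt ℝ f m ∈ Submodule.span ℝ (gramSchmidt ℝ f '' Set.Iio n) :=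
    Submodule.subset_span ⟨m, Finset.mem_Iio.mp hm, rfl⟩
  exact (Submodule.span_singleton_le_iff_mem _ _).mpr h1 (SetLike.coe_mem _)

lemma aux_inner_normalize {a : E} (h : a ≠ 0) : ⟪‖a‖⁻¹ • a, ‖a‖⁻¹ • a⟫ = 1 := by
  rw [real_inner_smul_left, real_inner_smul_right, real_inner_self_eq_norm_mul_norm]
  have := norm_ne_zero_iff.mpr h
  field_simp

lemma aux_norm_one {e : E} (h : ⟪e, e⟫ = 1) : ‖e‖ = 1 := by
  have h2 := real_inner_self_eq_norm_mul_norm e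
  nlinarith [norm_nonneg e]

lemma aux_norm_eq {a b : E} (h : ⟪a, a⟫ = ⟪b, b⟫) : ‖a‖ = ‖b‖ := by
  rw [real_inner_self_eq_norm_mul_norm, real_inner_self_eq_norm_mul_norm] at h
  nlinarith [norm_nonneg a, norm_nonneg b]

lemma aux_pair {U V : E} (hUU : ⟪U, U⟫ = 1) (hVV : ⟪V, V⟫ = 1)
    (h1 : U + V ≠ 0) (h2 : U - V ≠ 0) :
    ⟪(Real.sqrt 2)⁻¹ • (‖U + V‖⁻¹ • (U + V) + ‖U - V‖⁻¹ • (U - V)),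
      (Real.sqrt 2)⁻¹ • (‖U + V‖⁻¹ • (U + V) + ‖U - V‖⁻¹ • (U - V))⟫ = 1 ∧
    ⟪(Real.sqrt 2)⁻¹ • (‖U + V‖⁻¹ • (U + V) - ‖U - V‖⁻¹ • (U - V)),
      (Real.sqrt 2)⁻¹ • (‖U + V‖⁻¹ • (U + V) - ‖U - V‖⁻¹ • (U - V))⟫ = 1 ∧
    ⟪(Real.sqrt 2)⁻¹ • (‖U + V‖⁻¹ • (U + V) + ‖U - V‖⁻¹ • (U - V)),
      (Real.sqrt 2)⁻¹ • (‖U + V‖⁻¹ • (U + V) - ‖U - V‖⁻¹ • (U - V))⟫ = 0 := by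
  set P := ‖U + V‖⁻¹ • (U + V) with hP
  set Q := ‖U - V‖⁻¹ • (U - V) with hQ
  have hAB : ⟪U + V, U - V⟫ = 0 := by
    rw [inner_sub_right, inner_add_left, inner_add_left, hUU, hVV, real_inner_comm V U]
    ring
  have hPP : ⟪P, P⟫ = 1 := aux_inner_normalize h1
  have hQQ : ⟪Q, Q⟫ = 1 := aux_inner_normalize h2
  have hPQ : ⟪P, Q⟫ = 0 := by
    rw [hP, hQ, real_inner_smul_left, real_inner_smul_right, hAB]; ring
  have hQP : ⟪Q, P⟫ = 0 := by rw [real_inner_comm]; exact hPQ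
  have hs0 : Real.sqrt 2 ≠ 0 := by positivity
  refine ⟨?_, ?_, ?_⟩ <;>
  · rw [real_inner_smul_left, real_inner_smul_right]
    simp only [inner_add_left, inner_add_right, inner_sub_left, inner_sub_right,
      hPP, hQQ, hPQ, hQP]
    field_simp
    norm_num

end Aux

theorem stmt5 {E : Type*} [NormedAddCommGroup E] [InnerProductSpace ℝ E]
    (k : ℕ) (hk : 1 ≤ k)
    (x : ℕ → E) (hli : LinearIndependent ℝ (fun i : Fin (2 * k + 1) => x i))
    (z w : ℕ → E)
    (hz : ∀ j < 2 * k + 1, z j = if j % 2 = 0 then x (j / 2) else x (2 * k - j / 2))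
    (hw : ∀ j < 2 * k, w j = if j % 2 = 0 then x (2 * k - j / 2) else x (j / 2))
    (u v : ℕ → E)
    (hu : ∀ j < 2 * k + 1, u j = InnerProductSpace.gramSchmidtNormed ℝ z j)
    (hv : ∀ j < 2 * k, v j = InnerProductSpace.gramSchmidtNormed ℝ w j)
    (y : ℕ → E)
    (hy1 : ∀ i < k, y i = (Real.sqrt 2)⁻¹ •
      (‖u (2 * i) + v (2 * i)‖⁻¹ • (u (2 * i) + v (2 * i))
        + ‖u (2 * i) - v (2 * i)‖⁻¹ • (u (2 * i) - v (2 * i))))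
    (hy2 : ∀ i < k, y (2 * k - i) = (Real.sqrt 2)⁻¹ •
      (‖u (2 * i) + v (2 * i)‖⁻¹ • (u (2 * i) + v (2 * i))
        - ‖u (2 * i) - v (2 * i)‖⁻¹ • (u (2 * i) - v (2 * i))))
    (hy3 : y k = u (2 * k)) :
    (Orthonormal ℝ (fun j : Fin (2 * k + 1) => y j)
      ∧ ∀ i < k, ∀ j < i,
          ⟪y i, x j⟫ = 0 ∧ ⟪y i, x (2 * k - j)⟫ = 0
          ∧ ⟪y (2 * k - i), x j⟫ = 0 ∧ ⟪y (2 * k - i), x (2 * k - j)⟫ = 0)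
    ∧ (∀ i < k,
        Submodule.span ℝ {e : E | ∃ j ≤ i, e = x j ∨ e = x (2 * k - j)}
          = Submodule.span ℝ {e : E | ∃ j ≤ i, e = y j ∨ e = y (2 * k - j)})
    ∧ (∀ S : E →ₗ[ℝ] E, (∀ a, S (S a) = a) → (∀ a b, ⟪S a, b⟫ = ⟪a, S b⟫) →
        (∀ i < k, S (x i) = x (2 * k - i)) → S (x k) = x k →
        (∀ i < k, S (y i) = y (2 * k - i)) ∧ S (y k) = y k) := by
  classical
  set T : ℕ → Set E := fun i => {e : E | ∃ j < i, e = x j ∨ e = x (2 * k - j)} with hT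
  set V : ℕ → Submodule ℝ E := fun i => Submodule.span ℝ (T i) with hV
  have hTmono : ∀ {i j : ℕ}, i ≤ j → T i ⊆ T j := by
    intro i j hij e ⟨m, hm, he⟩
    exact ⟨m, lt_of_lt_of_le hm hij, he⟩
  have hVmono : ∀ {i j : ℕ}, i ≤ j → V i ≤ V j := fun hij =>
    Submodule.span_mono (hTmono hij)
  have hxT : ∀ {j i : ℕ}, j < i → x j ∈ T i := fun hj => ⟨_, hj, Or.inl rfl⟩
  have hxT' : ∀ {j i : ℕ}, j < i → x (2 * k - j) ∈ T i := fun hj => ⟨_, hj, Or.inr rfl⟩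
  -- the images of initial segments of z and w are both T i
  have hzIio : ∀ i ≤ k, z '' Set.Iio (2 * i) = T i := by
    intro i hi
    ext e
    constructor
    · rintro ⟨m, hm, rfl⟩
      rw [Set.mem_Iio] at hm
      rw [hz m (by omega)]
      by_cases hp : m % 2 = 0
      · rw [if_pos hp]; exact ⟨m / 2, by omega, Or.inl rfl⟩
      · rw [if_neg hp]; exact ⟨m / 2, by omega, Or.inr rfl⟩
    · rintro ⟨j, hj, rfl | rfl⟩
      · refine ⟨2 * j, Set.mem_Iio.mpr (by omega), ?_⟩
        rw [hz (2 * j) (by omega), if_pos (by omega)]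
        congr 1; omega
      · refine ⟨2 * j + 1, Set.mem_Iio.mpr (by omega), ?_⟩
        rw [hz (2 * j + 1) (by omega), if_neg (by omega)]
        congr 2; omega
  have hwIio : ∀ i ≤ k, w '' Set.Iio (2 * i) = T i := by
    intro i hi
    ext e
    constructor
    · rintro ⟨m, hm, rfl⟩
      rw [Set.mem_Iio] at hm
      rw [hw m (by omega)]
      by_cases hp : m % 2 = 0
      · rw [if_pos hp]; exact ⟨m / 2, by omega, Or.inr rfl⟩
      · rw [if_neg hp]; exact ⟨m / 2, by omega, Or.inl rfl⟩
    · rintro ⟨j, hj, rfl | rfl⟩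
      · refine ⟨2 * j + 1, Set.mem_Iio.mpr (by omega), ?_⟩
        rw [hw (2 * j + 1) (by omega), if_neg (by omega)]
        congr 1; omega
      · refine ⟨2 * j, Set.mem_Iio.mpr (by omega), ?_⟩
        rw [hw (2 * j) (by omega), if_pos (by omega)]
        congr 2; omega
  -- linear independence of initial segments
  have hliz : ∀ i ≤ k, LinearIndependent ℝ (z ∘ ((↑) : Set.Iic (2 * i) → ℕ)) := by
    intro i hi
    have hb : ∀ m : Set.Iic (2 * i),
        (if (m : ℕ) % 2 = 0 then (m : ℕ) / 2 else 2 * k - (m : ℕ) / 2) < 2 * k + 1 := by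
      intro m; have := Set.mem_Iic.mp m.2; split <;> omega
    set σ : Set.Iic (2 * i) → Fin (2 * k + 1) := fun m => ⟨_, hb m⟩ with hσ
    have hinj : Function.Injective σ := by
      intro m₁ m₂ h
      have h1 := Set.mem_Iic.mp m₁.2
      have h2 := Set.mem_Iic.mp m₂.2
      have h' := congrArg Fin.val h
      simp only [hσ] at h'
      apply Subtype.ext
      split at h' <;> split at h' <;> omega
    have hcomp : z ∘ ((↑) : Set.Iic (2 * i) → ℕ) = (fun m : Fin (2 * k + 1) => x m) ∘ σ := by
      funext m
      have h1 := Set.mem_Iic.mp m.2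
      simp only [Function.comp_apply, hσ]
      rw [hz m (by omega)]
      split <;> rfl
    rw [hcomp]
    exact hli.comp σ hinj
  have hliw : ∀ i < k, LinearIndependent ℝ (w ∘ ((↑) : Set.Iic (2 * i) → ℕ)) := by
    intro i hi
    have hb : ∀ m : Set.Iic (2 * i),
        (if (m : ℕ) % 2 = 0 then 2 * k - (m : ℕ) / 2 else (m : ℕ) / 2) < 2 * k + 1 := by
      intro m; have := Set.mem_Iic.mp m.2; split <;> omega
    set σ : Set.Iic (2 * i) → Fin (2 * k + 1) := fun m => ⟨_, hb m⟩ with hσ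
    have hinj : Function.Injective σ := by
      intro m₁ m₂ h
      have h1 := Set.mem_Iic.mp m₁.2
      have h2 := Set.mem_Iic.mp m₂.2
      have h' := congrArg Fin.val h
      simp only [hσ] at h'
      apply Subtype.ext
      split at h' <;> split at h' <;> omega
    have hcomp : w ∘ ((↑) : Set.Iic (2 * i) → ℕ) = (fun m : Fin (2 * k + 1) => x m) ∘ σ := by
      funext m
      have h1 := Set.mem_Iic.mp m.2
      simp only [Function.comp_apply, hσ]
      rw [hw m (by omega)]
      split <;> rfl
    rw [hcomp]
    exact hli.comp σ hinj
  -- the unnormalized Gram-Schmidt vectors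
  set a : ℕ → E := fun i => gramSchmidt ℝ z (2 * i) with ha
  set b : ℕ → E := fun i => gramSchmidt ℝ w (2 * i) with hb
  have haO : ∀ i ≤ k, a i ∈ (V i)ᗮ := by
    intro i hi
    have := aux_gs_orth z (2 * i)
    rwa [hzIio i hi] at this
  have hbO : ∀ i < k, b i ∈ (V i)ᗮ := by
    intro i hi
    have := aux_gs_orth w (2 * i)
    rwa [hwIio i hi.le] at this
  have had : ∀ i ≤ k, x i - a i ∈ V i := by
    intro i hi
    have := aux_gs_diff z (2 * i)
    rw [hzIio i hi, hz (2 * i) (by omega), if_pos (by omega)] at this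
    have he : 2 * i / 2 = i := by omega
    rwa [he] at this
  have hbd : ∀ i < k, x (2 * k - i) - b i ∈ V i := by
    intro i hi
    have := aux_gs_diff w (2 * i)
    rw [hwIio i hi.le, hw (2 * i) (by omega), if_pos (by omega)] at this
    have he : 2 * i / 2 = i := by omega
    rwa [he] at this
  have hane : ∀ i ≤ k, a i ≠ 0 := fun i hi =>
    gramSchmidt_ne_zero_coe (2 * i) (hliz i hi)
  have hbne : ∀ i < k, b i ≠ 0 := fun i hi =>
    gramSchmidt_ne_zero_coe (2 * i) (hliw i hi)
  have haV : ∀ i ≤ k, a i ∈ V (i + 1) := by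
    intro i hi
    have h1 : x i ∈ V (i + 1) := Submodule.subset_span (hxT (by omega))
    have h2 : x i - a i ∈ V (i + 1) := hVmono (by omega) (had i hi)
    have : a i = x i - (x i - a i) := by abel
    rw [this]; exact sub_mem h1 h2
  have hbV : ∀ i < k, b i ∈ V (i + 1) := by
    intro i hi
    have h1 : x (2 * k - i) ∈ V (i + 1) := Submodule.subset_span (hxT' (by omega))
    have h2 : x (2 * k - i) - b i ∈ V (i + 1) := hVmono (by omega) (hbd i hi)
    have : b i = x (2 * k - i) - (x (2 * k - i) - b i) := by abel
    rw [this]; exact sub_mem h1 h2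
  -- normalized vectors
  have hU : ∀ i ≤ k, u (2 * i) = ‖a i‖⁻¹ • a i := by
    intro i hi
    rw [hu (2 * i) (by omega)]
    simp [gramSchmidtNormed, ha]
  have hVv : ∀ i < k, v (2 * i) = ‖b i‖⁻¹ • b i := by
    intro i hi
    rw [hv (2 * i) (by omega)]
    simp [gramSchmidtNormed, hb]
  have hUO : ∀ i ≤ k, u (2 * i) ∈ (V i)ᗮ := by
    intro i hi; rw [hU i hi]; exact Submodule.smul_mem _ _ (haO i hi)
  have hVvO : ∀ i < k, v (2 * i) ∈ (V i)ᗮ := by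
    intro i hi; rw [hVv i hi]; exact Submodule.smul_mem _ _ (hbO i hi)
  have hUV1 : ∀ i ≤ k, u (2 * i) ∈ V (i + 1) := by
    intro i hi; rw [hU i hi]; exact Submodule.smul_mem _ _ (haV i hi)
  have hVvV1 : ∀ i < k, v (2 * i) ∈ V (i + 1) := by
    intro i hi; rw [hVv i hi]; exact Submodule.smul_mem _ _ (hbV i hi)
  have hUU : ∀ i ≤ k, ⟪u (2 * i), u (2 * i)⟫ = 1 := by
    intro i hi; rw [hU i hi]; exact aux_inner_normalize (hane i hi)
  have hVVin : ∀ i < k, ⟪v (2 * i), v (2 * i)⟫ = 1 := by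
    intro i hi; rw [hVv i hi]; exact aux_inner_normalize (hbne i hi)
  -- nondegeneracy of u ± v
  have hspan_ne : ∀ i < k, ∀ c : ℝ, b i = c • a i → False := by
    intro i hi c hc
    have hxs : (⟨2 * k - i, by omega⟩ : Fin (2 * k + 1)) ∉
        {m : Fin (2 * k + 1) | (m : ℕ) ≠ 2 * k - i} := by simp
    have hnot := hli.notMem_span_image hxs
    apply hnot
    have hVle : V i ≤ Submodule.span ℝ
        ((fun m : Fin (2 * k + 1) => x m) '' {m | (m : ℕ) ≠ 2 * k - i}) := by
      rw [hV]
      apply Submodule.span_le.mpr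
      rintro e ⟨j, hj, rfl | rfl⟩
      · exact Submodule.subset_span
          ⟨⟨j, by omega⟩, by simp only [Set.mem_setOf_eq]; omega, rfl⟩
      · exact Submodule.subset_span
          ⟨⟨2 * k - j, by omega⟩, by simp only [Set.mem_setOf_eq]; omega, rfl⟩
    have hxi : x i ∈ Submodule.span ℝ
        ((fun m : Fin (2 * k + 1) => x m) '' {m | (m : ℕ) ≠ 2 * k - i}) :=
      Submodule.subset_span ⟨⟨i, by omega⟩, by simp only [Set.mem_setOf_eq]; omega, rfl⟩
    have hai : a i ∈ Submodule.span ℝ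
        ((fun m : Fin (2 * k + 1) => x m) '' {m | (m : ℕ) ≠ 2 * k - i}) := by
      have he : a i = x i - (x i - a i) := by abel
      rw [he]; exact sub_mem hxi (hVle (had i hi.le))
    have hbi : b i ∈ Submodule.span ℝ
        ((fun m : Fin (2 * k + 1) => x m) '' {m | (m : ℕ) ≠ 2 * k - i}) := by
      rw [hc]; exact Submodule.smul_mem _ _ hai
    show x (2 * k - i) ∈ _
    have he : x (2 * k - i) = (x (2 * k - i) - b i) + b i := by abel
    rw [he]; exact add_mem (hVle (hbd i hi)) hbi
  have hsd_ne : ∀ i < k, u (2 * i) + v (2 * i) ≠ 0 ∧ u (2 * i) - v (2 * i) ≠ 0 := by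
    intro i hi
    have hna : ‖a i‖ ≠ 0 := norm_ne_zero_iff.mpr (hane i hi.le)
    have hnb : ‖b i‖ ≠ 0 := norm_ne_zero_iff.mpr (hbne i hi)
    constructor
    · intro h
      have hveq : v (2 * i) = -(‖a i‖⁻¹ • a i) := by
        rw [← hU i hi.le]; exact eq_neg_of_add_eq_zero_right h
      apply hspan_ne i hi (-(‖b i‖ * ‖a i‖⁻¹))
      have h2 : ‖b i‖ • v (2 * i) = (-(‖b i‖ * ‖a i‖⁻¹)) • a i := by
        rw [hveq]; module
      rw [← h2, hVv i hi, smul_inv_smul₀ hnb]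
    · intro h
      have hveq : v (2 * i) = ‖a i‖⁻¹ • a i := by
        rw [← hU i hi.le]; exact (sub_eq_zero.mp h).symm
      apply hspan_ne i hi (‖b i‖ * ‖a i‖⁻¹)
      have h2 : ‖b i‖ • v (2 * i) = (‖b i‖ * ‖a i‖⁻¹) • a i := by
        rw [hveq]; module
      rw [← h2, hVv i hi, smul_inv_smul₀ hnb]
  -- inner product facts for the pairs
  have hyfacts : ∀ i < k,
      ⟪y i, y i⟫ = 1 ∧ ⟪y (2 * k - i), y (2 * k - i)⟫ = 1 ∧ ⟪y i, y (2 * k - i)⟫ = 0 := by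
    intro i hi
    have hp := aux_pair (hUU i hi.le) (hVVin i hi) (hsd_ne i hi).1 (hsd_ne i hi).2
    rw [hy1 i hi, hy2 i hi]
    exact ⟨hp.1, hp.2.1, hp.2.2⟩
  -- membership facts
  have hyV : ∀ i < k, y i ∈ V (i + 1) ∧ y (2 * k - i) ∈ V (i + 1) := by
    intro i hi
    have hu1 := hUV1 i hi.le
    have hv1 := hVvV1 i hi
    constructor
    · rw [hy1 i hi]
      exact Submodule.smul_mem _ _ (add_mem (Submodule.smul_mem _ _ (add_mem hu1 hv1))
        (Submodule.smul_mem _ _ (sub_mem hu1 hv1)))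
    · rw [hy2 i hi]
      exact Submodule.smul_mem _ _ (sub_mem (Submodule.smul_mem _ _ (add_mem hu1 hv1))
        (Submodule.smul_mem _ _ (sub_mem hu1 hv1)))
  have hyO : ∀ i < k, y i ∈ (V i)ᗮ ∧ y (2 * k - i) ∈ (V i)ᗮ := by
    intro i hi
    have hu1 := hUO i hi.le
    have hv1 := hVvO i hi
    constructor
    · rw [hy1 i hi]
      exact Submodule.smul_mem _ _ (add_mem (Submodule.smul_mem _ _ (add_mem hu1 hv1))
        (Submodule.smul_mem _ _ (sub_mem hu1 hv1)))
    · rw [hy2 i hi]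
      exact Submodule.smul_mem _ _ (sub_mem (Submodule.smul_mem _ _ (add_mem hu1 hv1))
        (Submodule.smul_mem _ _ (sub_mem hu1 hv1)))
  have hykk : ⟪y k, y k⟫ = 1 := by
    rw [hy3, hU k le_rfl]; exact aux_inner_normalize (hane k le_rfl)
  have hykV : y k ∈ V (k + 1) := by rw [hy3]; exact hUV1 k le_rfl
  have hykO : y k ∈ (V k)ᗮ := by rw [hy3]; exact hUO k le_rfl
  -- master facts indexed by positions m ≤ 2k
  have hmV : ∀ m ≤ 2 * k, y m ∈ V (min m (2 * k - m) + 1) := by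
    intro m hm
    rcases Nat.lt_trichotomy m k with h | h | h
    · have he : min m (2 * k - m) = m := by omega
      rw [he]; exact (hyV m h).1
    · have he : min m (2 * k - m) = m := by omega
      rw [he, h]; exact hykV
    · obtain ⟨i, hik, rfl⟩ : ∃ i, i < k ∧ m = 2 * k - i := ⟨2 * k - m, by omega, by omega⟩
      have he : min (2 * k - i) (2 * k - (2 * k - i)) = i := by omega
      rw [he]; exact (hyV i hik).2
  have hmO : ∀ m ≤ 2 * k, y m ∈ (V (min m (2 * k - m)))ᗮ := by
    intro m hm
    rcases Nat.lt_trichotomy m k with h | h | h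
    · have he : min m (2 * k - m) = m := by omega
      rw [he]; exact (hyO m h).1
    · have he : min m (2 * k - m) = m := by omega
      rw [he, h]; exact hykO
    · obtain ⟨i, hik, rfl⟩ : ∃ i, i < k ∧ m = 2 * k - i := ⟨2 * k - m, by omega, by omega⟩
      have he : min (2 * k - i) (2 * k - (2 * k - i)) = i := by omega
      rw [he]; exact (hyO i hik).2
  have hm1 : ∀ m ≤ 2 * k, ⟪y m, y m⟫ = 1 := by
    intro m hm
    rcases Nat.lt_trichotomy m k with h | h | h
    · exact (hyfacts m h).1
    · rw [h]; exact hykk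
    · obtain ⟨i, hik, rfl⟩ : ∃ i, i < k ∧ m = 2 * k - i := ⟨2 * k - m, by omega, by omega⟩
      exact (hyfacts i hik).2.1
  have hzero : ∀ m ≤ 2 * k, ∀ m' ≤ 2 * k,
      min m (2 * k - m) < min m' (2 * k - m') → ⟪y m, y m'⟫ = 0 := by
    intro m hm m' hm' hlt
    have h1 : y m ∈ V (min m' (2 * k - m')) := hVmono (by omega) (hmV m hm)
    exact Submodule.inner_right_of_mem_orthogonal h1 (hmO m' hm')
  have hzero' : ∀ m ≤ 2 * k, ∀ m' ≤ 2 * k, m ≠ m' → ⟪y m, y m'⟫ = 0 := by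
    intro m hm m' hm' hne
    rcases lt_trichotomy (min m (2 * k - m)) (min m' (2 * k - m')) with h | h | h
    · exact hzero m hm m' hm' h
    · obtain ⟨l, hlk, hml⟩ : ∃ l, l < k ∧
          ((m = l ∧ m' = 2 * k - l) ∨ (m' = l ∧ m = 2 * k - l)) :=
        ⟨min m (2 * k - m), by omega, by omega⟩
      rcases hml with ⟨h1, h2⟩ | ⟨h1, h2⟩
      · rw [h1, h2]; exact (hyfacts l hlk).2.2
      · rw [h1, h2, real_inner_comm]; exact (hyfacts l hlk).2.2
    · rw [real_inner_comm]; exact hzero m' hm' m hm h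
  refine ⟨⟨?_, ?_⟩, ?_, ?_⟩
  · -- orthonormality
    rw [orthonormal_iff_ite]
    intro i j
    by_cases hij : i = j
    · subst hij
      rw [if_pos rfl]
      exact hm1 i.1 (by have := i.isLt; omega)
    · rw [if_neg hij]
      exact hzero' i.1 (by have := i.isLt; omega) j.1 (by have := j.isLt; omega)
        (fun h => hij (Fin.ext h))
  · -- orthogonality to earlier x's
    intro i hik j hji
    have hxj : x j ∈ V i := Submodule.subset_span (hxT hji)
    have hxj' : x (2 * k - j) ∈ V i := Submodule.subset_span (hxT' hji)
    have h1 := (hyO i hik).1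
    have h2 := (hyO i hik).2
    exact ⟨Submodule.inner_left_of_mem_orthogonal hxj h1, Submodule.inner_left_of_mem_orthogonal hxj' h1,
      Submodule.inner_left_of_mem_orthogonal hxj h2, Submodule.inner_left_of_mem_orthogonal hxj' h2⟩
  · -- span equality
    intro i hik
    set Y : ℕ → Submodule ℝ E :=
      fun i => Submodule.span ℝ {e : E | ∃ j < i, e = y j ∨ e = y (2 * k - j)} with hY
    have hYmono : ∀ {i j : ℕ}, i ≤ j → Y i ≤ Y j := by
      intro i j hij
      apply Submodule.span_mono
      rintro e ⟨m, hm, he⟩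
      exact ⟨m, lt_of_lt_of_le hm hij, he⟩
    have key : ∀ l ≤ k, V l = Y l := by
      intro l
      induction l with
      | zero =>
        intro _
        have h1 : T 0 = (∅ : Set E) := by ext e; simp [hT]
        have h2 : {e : E | ∃ j < 0, e = y j ∨ e = y (2 * k - j)} = (∅ : Set E) := by
          ext e; simp
        rw [hV, hY]
        simp only [h1, h2]
      | succ l ih =>
        intro hl1
        have hlk : l < k := by omega
        have ihl := ih (by omega)
        have hc : (Real.sqrt 2)⁻¹ ≠ 0 := by positivity
        apply le_antisymm
        · -- V (l+1) ≤ Y (l+1)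
          have hyY1 : y l ∈ Y (l + 1) := Submodule.subset_span ⟨l, by omega, Or.inl rfl⟩
          have hyY2 : y (2 * k - l) ∈ Y (l + 1) :=
            Submodule.subset_span ⟨l, by omega, Or.inr rfl⟩
          have hA0 : ‖u (2 * l) + v (2 * l)‖ ≠ 0 := norm_ne_zero_iff.mpr (hsd_ne l hlk).1
          have hB0 : ‖u (2 * l) - v (2 * l)‖ ≠ 0 := norm_ne_zero_iff.mpr (hsd_ne l hlk).2
          have hPsum : y l + y (2 * k - l) = (2 * (Real.sqrt 2)⁻¹) •
              (‖u (2 * l) + v (2 * l)‖⁻¹ • (u (2 * l) + v (2 * l))) := by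
            rw [hy1 l hlk, hy2 l hlk]; module
          have hPdiff : y l - y (2 * k - l) = (2 * (Real.sqrt 2)⁻¹) •
              (‖u (2 * l) - v (2 * l)‖⁻¹ • (u (2 * l) - v (2 * l))) := by
            rw [hy1 l hlk, hy2 l hlk]; module
          have h2c : (2 * (Real.sqrt 2)⁻¹ : ℝ) ≠ 0 := by positivity
          have hPmem : ‖u (2 * l) + v (2 * l)‖⁻¹ • (u (2 * l) + v (2 * l)) ∈ Y (l + 1) := by
            have := inv_smul_smul₀ h2c
              (‖u (2 * l) + v (2 * l)‖⁻¹ • (u (2 * l) + v (2 * l)))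
            rw [← this, ← hPsum]
            exact Submodule.smul_mem _ _ (add_mem hyY1 hyY2)
          have hQmem : ‖u (2 * l) - v (2 * l)‖⁻¹ • (u (2 * l) - v (2 * l)) ∈ Y (l + 1) := by
            have := inv_smul_smul₀ h2c
              (‖u (2 * l) - v (2 * l)‖⁻¹ • (u (2 * l) - v (2 * l)))
            rw [← this, ← hPdiff]
            exact Submodule.smul_mem _ _ (sub_mem hyY1 hyY2)
          have hAmem : u (2 * l) + v (2 * l) ∈ Y (l + 1) := by
            have := smul_inv_smul₀ hA0 (u (2 * l) + v (2 * l))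
            rw [← this]
            exact Submodule.smul_mem _ _ hPmem
          have hBmem : u (2 * l) - v (2 * l) ∈ Y (l + 1) := by
            have := smul_inv_smul₀ hB0 (u (2 * l) - v (2 * l))
            rw [← this]
            exact Submodule.smul_mem _ _ hQmem
          have humem : u (2 * l) ∈ Y (l + 1) := by
            have he : u (2 * l) = (2 : ℝ)⁻¹ • ((u (2 * l) + v (2 * l)) + (u (2 * l) - v (2 * l))) := by
              module
            rw [he]
            exact Submodule.smul_mem _ _ (add_mem hAmem hBmem)
          have hvmem : v (2 * l) ∈ Y (l + 1) := by
            have he : v (2 * l) = (2 : ℝ)⁻¹ • ((u (2 * l) + v (2 * l)) - (u (2 * l) - v (2 * l))) := by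
              module
            rw [he]
            exact Submodule.smul_mem _ _ (sub_mem hAmem hBmem)
          have hamem : a l ∈ Y (l + 1) := by
            have he : ‖a l‖ • u (2 * l) = a l := by
              rw [hU l hlk.le, smul_inv_smul₀ (norm_ne_zero_iff.mpr (hane l hlk.le))]
            rw [← he]
            exact Submodule.smul_mem _ _ humem
          have hbmem : b l ∈ Y (l + 1) := by
            have he : ‖b l‖ • v (2 * l) = b l := by
              rw [hVv l hlk, smul_inv_smul₀ (norm_ne_zero_iff.mpr (hbne l hlk))]
            rw [← he]
            exact Submodule.smul_mem _ _ hvmem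
          apply Submodule.span_le.mpr
          rintro e ⟨j, hj, rfl | rfl⟩
          · rcases Nat.lt_succ_iff_lt_or_eq.mp hj with hjl | rfl
            · have hm : x j ∈ V l := Submodule.subset_span (hxT hjl)
              rw [ihl] at hm
              exact hYmono (by omega) hm
            · have he : x j = (x j - a j) + a j := by abel
              have hm : x j - a j ∈ V j := had j hlk.le
              rw [ihl] at hm
              rw [he]
              exact add_mem (hYmono (by omega) hm) hamem
          · rcases Nat.lt_succ_iff_lt_or_eq.mp hj with hjl | rfl
            · have hm : x (2 * k - j) ∈ V l := Submodule.subset_span (hxT' hjl)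
              rw [ihl] at hm
              exact hYmono (by omega) hm
            · have he : x (2 * k - j) = (x (2 * k - j) - b j) + b j := by abel
              have hm : x (2 * k - j) - b j ∈ V j := hbd j hlk
              rw [ihl] at hm
              rw [he]
              exact add_mem (hYmono (by omega) hm) hbmem
        · -- Y (l+1) ≤ V (l+1)
          apply Submodule.span_le.mpr
          rintro e ⟨j, hj, rfl | rfl⟩
          · rcases Nat.lt_succ_iff_lt_or_eq.mp hj with hjl | rfl
            · have hm : y j ∈ Y l := Submodule.subset_span ⟨j, hjl, Or.inl rfl⟩
              rw [← ihl] at hm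
              exact hVmono (by omega) hm
            · exact (hyV j hlk).1
          · rcases Nat.lt_succ_iff_lt_or_eq.mp hj with hjl | rfl
            · have hm : y (2 * k - j) ∈ Y l := Submodule.subset_span ⟨j, hjl, Or.inr rfl⟩
              rw [← ihl] at hm
              exact hVmono (by omega) hm
            · exact (hyV j hlk).2
    have hset1 : {e : E | ∃ j ≤ i, e = x j ∨ e = x (2 * k - j)} = T (i + 1) := by
      ext e
      simp only [hT, Set.mem_setOf_eq, Nat.lt_succ_iff]
    have hset2 : {e : E | ∃ j ≤ i, e = y j ∨ e = y (2 * k - j)}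
        = {e : E | ∃ j < i + 1, e = y j ∨ e = y (2 * k - j)} := by
      ext e
      simp only [Set.mem_setOf_eq, Nat.lt_succ_iff]
    rw [hset1, hset2]
    exact key (i + 1) (by omega)
  · -- symmetry part
    intro S hS2 hsym hS1 hSk
    have hSV : ∀ i ≤ k, ∀ e ∈ V i, S e ∈ V i := by
      intro i hi e he
      induction he using Submodule.span_induction with
      | mem e he =>
        obtain ⟨j, hj, rfl | rfl⟩ := he
        · rw [hS1 j (by omega)]
          exact Submodule.subset_span (hxT' hj)
        · have he2 : S (x (2 * k - j)) = x j := by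
            rw [← hS1 j (by omega), hS2]
          rw [he2]
          exact Submodule.subset_span (hxT hj)
      | zero => rw [map_zero]; exact zero_mem _
      | add e f _ _ h1 h2 => rw [map_add]; exact add_mem h1 h2
      | smul c e _ h1 => rw [map_smul]; exact Submodule.smul_mem _ _ h1
    have hSO : ∀ i ≤ k, ∀ e ∈ (V i)ᗮ, S e ∈ (V i)ᗮ := by
      intro i hi e he
      rw [Submodule.mem_orthogonal]
      intro g hg
      rw [← hsym g e]
      exact Submodule.inner_right_of_mem_orthogonal (hSV i hi g hg) he
    have hiso : ∀ e : E, ⟪S e, S e⟫ = ⟪e, e⟫ := by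
      intro e
      rw [hsym, hS2]
    have hSa : ∀ i < k, S (a i) = b i := by
      intro i hi
      have h1 : S (a i) - b i ∈ (V i)ᗮ :=
        sub_mem (hSO i hi.le _ (haO i hi.le)) (hbO i hi)
      have h2 : x (2 * k - i) - S (a i) ∈ V i := by
        have he : x (2 * k - i) - S (a i) = S (x i - a i) := by
          rw [map_sub, hS1 i hi]
        rw [he]
        exact hSV i hi.le _ (had i hi.le)
      have h3 : S (a i) - b i ∈ V i := by
        have he : S (a i) - b i = (x (2 * k - i) - b i) - (x (2 * k - i) - S (a i)) := by
          abel
        rw [he]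
        exact sub_mem (hbd i hi) h2
      have h4 : ⟪S (a i) - b i, S (a i) - b i⟫ = 0 :=
        Submodule.inner_right_of_mem_orthogonal h3 h1
      have h5 : S (a i) - b i = 0 := inner_self_eq_zero.mp h4
      exact sub_eq_zero.mp h5
    have hSak : S (a k) = a k := by
      have h1 : S (a k) - a k ∈ (V k)ᗮ :=
        sub_mem (hSO k le_rfl _ (haO k le_rfl)) (haO k le_rfl)
      have h2 : x k - S (a k) ∈ V k := by
        have he : x k - S (a k) = S (x k - a k) := by
          rw [map_sub, hSk]
        rw [he]
        exact hSV k le_rfl _ (had k le_rfl)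
      have h3 : S (a k) - a k ∈ V k := by
        have he : S (a k) - a k = (x k - a k) - (x k - S (a k)) := by abel
        rw [he]
        exact sub_mem (had k le_rfl) h2
      have h4 : ⟪S (a k) - a k, S (a k) - a k⟫ = 0 :=
        Submodule.inner_right_of_mem_orthogonal h3 h1
      exact sub_eq_zero.mp (inner_self_eq_zero.mp h4)
    have hnab : ∀ i < k, ‖a i‖ = ‖b i‖ := by
      intro i hi
      apply aux_norm_eq
      rw [← hSa i hi, hiso]
    have hSu : ∀ i < k, S (u (2 * i)) = v (2 * i) := by
      intro i hi
      rw [hU i hi.le, hVv i hi, map_smul, hSa i hi, hnab i hi]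
    have hSv : ∀ i < k, S (v (2 * i)) = u (2 * i) := by
      intro i hi
      have hb' : S (b i) = a i := by rw [← hSa i hi, hS2]
      rw [hU i hi.le, hVv i hi, map_smul, hb', hnab i hi]
    constructor
    · intro i hi
      rw [hy1 i hi, hy2 i hi, map_smul, map_add, map_smul, map_smul, map_add, map_sub,
        hSu i hi, hSv i hi]
      module
    · rw [hy3, hU k le_rfl, map_smul, hSak]
end

section
/- Define the real sequence (h_l)_{l≥0} by h₀ = 1/4 and h_{l+1} = −((2√2 − 1)/2)·h_l²/(1 − h_l²), and set a = 8(2√2 − 1)/15. Then: (1) the sequence of absolute values is nonincreasing, i.e. |h_{l+1}| ≤ |h_l| for all l ≥ 0; (2) for every l ≥ 1, |h_l| ≤ (1/a)·(a/4)^(2^l). -/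
theorem stmt8 (h : ℕ → ℝ) (h0 : h 0 = 1 / 4)
    (hrec : ∀ l, h (l + 1) = -((2 * Real.sqrt 2 - 1) / 2) * (h l) ^ 2 / (1 - (h l) ^ 2))
    (a : ℝ) (ha : a = 8 * (2 * Real.sqrt 2 - 1) / 15) :
    (∀ l, |h (l + 1)| ≤ |h l|)
    ∧ (∀ l, 1 ≤ l → |h l| ≤ (1 / a) * (a / 4) ^ (2 ^ l)) := by
  have hs : Real.sqrt 2 ^ 2 = 2 := Real.sq_sqrt (by norm_num)
  have hs0 : (0:ℝ) ≤ Real.sqrt 2 := Real.sqrt_nonneg 2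
  have hs1 : (1.414 : ℝ) ≤ Real.sqrt 2 := by nlinarith
  have hs2 : Real.sqrt 2 ≤ 1.415 := by nlinarith
  set c : ℝ := (2 * Real.sqrt 2 - 1) / 2 with hc
  have hc0 : (0:ℝ) < c := by rw [hc]; nlinarith
  have hac : a = 16 / 15 * c := by rw [ha, hc]; ring
  have ha0 : (0:ℝ) < a := by rw [hac]; linarith
  have ha1 : a ≤ 1 := by rw [hac, hc]; nlinarith
  -- key step: if |h l| ≤ 1/4 then |h (l+1)| ≤ a * (h l)^2
  have key : ∀ l, |h l| ≤ 1/4 → |h (l+1)| ≤ a * (h l)^2 := by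
    intro l hl
    have hsq : (h l)^2 ≤ 1/16 := by
      have := sq_abs (h l)
      nlinarith [abs_nonneg (h l)]
    have hden : (0:ℝ) < 1 - (h l)^2 := by nlinarith [sq_nonneg (h l)]
    rw [hrec l]
    have : |(-c * (h l)^2 / (1 - (h l)^2))| = c * (h l)^2 / (1 - (h l)^2) := by
      rw [abs_div, abs_of_pos hden, abs_of_nonpos (by nlinarith [sq_nonneg (h l)])]
      ring
    have h3 : c ≤ a * (1 - (h l)^2) := by rw [hac]; nlinarith
    rw [this, div_le_iff₀ hden]
    nlinarith [mul_le_mul_of_nonneg_right h3 (sq_nonneg (h l))]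
  -- boundedness
  have bdd : ∀ l, |h l| ≤ 1/4 := by
    intro l
    induction l with
    | zero => rw [h0, abs_of_nonneg (by norm_num : (0:ℝ) ≤ 1/4)]
    | succ n ih =>
      have := key n ih
      have hsq : (h n)^2 ≤ 1/16 := by
        have := sq_abs (h n)
        nlinarith [abs_nonneg (h n)]
      nlinarith
  constructor
  · intro l
    have := key l (bdd l)
    have hsq : (h l)^2 = |h l| * |h l| := by rw [← sq_abs]; ring
    nlinarith [bdd l, abs_nonneg (h l)]
  · -- first: a * |h l| ≤ (a/4)^(2^l) for all l
    have main : ∀ l, a * |h l| ≤ (a/4) ^ (2^l) := by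
      intro l
      induction l with
      | zero =>
        rw [h0, abs_of_nonneg (by norm_num : (0:ℝ) ≤ 1/4)]
        norm_num
        linarith
      | succ n ih =>
        have hk := key n (bdd n)
        have hsq : (h n)^2 = |h n| * |h n| := by rw [← sq_abs]; ring
        have h1 : a * |h (n+1)| ≤ (a * |h n|)^2 :=
          calc a * |h (n+1)| ≤ a * (a * (h n)^2) := mul_le_mul_of_nonneg_left hk ha0.le
            _ = (a * |h n|)^2 := by rw [hsq]; ring
        have h2 : (a * |h n|)^2 ≤ ((a/4) ^ (2^n))^2 := by
          apply sq_le_sq'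
          · nlinarith [abs_nonneg (h n), pow_nonneg (by positivity : (0:ℝ) ≤ a/4) (2^n)]
          · exact ih
        calc a * |h (n+1)| ≤ ((a/4) ^ (2^n))^2 := le_trans h1 h2
          _ = (a/4) ^ (2^(n+1)) := by rw [← pow_mul]; ring_nf
    intro l _
    rw [one_div, inv_mul_eq_div, le_div_iff₀ ha0]
    nlinarith [main l]
end

section
/- Let ξ : ℕ → ℝ, let l, k : ℕ with ξ_{l+k} ≠ ξ_l and ξ_{l+k+1} ≠ ξ_{l+1}, and let x ∈ ℝ. Let f, g : ℝ → ℝ and define F : ℝ → ℝ by F(t) = ((t−ξ_l)/(ξ_{l+k}−ξ_l))·f(t) + ((ξ_{l+k+1}−t)/(ξ_{l+k+1}−ξ_{l+1}))·g(t). If i ≥ 1 and f and g are i-times continuously differentiable on an open set containing x, then iteratedDeriv i F x = (i/(ξ_{l+k}−ξ_l))·iteratedDeriv (i−1) f x + ((x−ξ_l)/(ξ_{l+k}−ξ_l))·iteratedDeriv i f x + (i/(ξ_{l+1}−ξ_{l+k+1}))·iteratedDeriv (i−1) g x + ((ξ_{l+k+1}−x)/(ξ_{l+k+1}−ξ_{l+1}))·iteratedDeriv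 i g x. -/
open Set

private lemma idw_open {n : ℕ} {f : ℝ → ℝ} {U : Set ℝ} (hU : IsOpen U) {x : ℝ} (hx : x ∈ U) :
    iteratedDerivWithin n f U x = iteratedDeriv n f x := by
  rw [iteratedDerivWithin_eq_iteratedFDerivWithin, iteratedDeriv_eq_iteratedFDeriv,
    iteratedFDerivWithin_of_isOpen n hU hx]

private lemma key (c e : ℝ) {U : Set ℝ} (hU : IsOpen U) :
    ∀ (n : ℕ) (f : ℝ → ℝ), ContDiffOn ℝ n f U → ∀ x ∈ U,
      iteratedDerivWithin n (fun t => (c * t + e) * f t) U x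
        = (n : ℝ) * c * iteratedDerivWithin (n - 1) f U x
          + (c * x + e) * iteratedDerivWithin n f U x := by
  intro n
  induction n with
  | zero => intro f hf x hx; simp
  | succ n IH =>
    intro f hf x hx
    have ud : UniqueDiffOn ℝ U := hU.uniqueDiffOn
    have hfd : DifferentiableOn ℝ f U :=
      hf.differentiableOn (by simp)
    set f' : ℝ → ℝ := derivWithin f U with hf'def
    have hf' : ContDiffOn ℝ n f' U := hf.derivWithin ud (by exact_mod_cast le_refl (n + 1))
    have hlind : Differentiable ℝ (fun t : ℝ => c * t + e) :=
      (differentiable_id.const_mul c).add_const e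
    have hlin : ContDiff ℝ (⊤ : ℕ∞) (fun t : ℝ => c * t + e) :=
      (contDiff_const.mul contDiff_id).add contDiff_const
    have heq : Set.EqOn (derivWithin (fun t => (c * t + e) * f t) U)
        (fun t => c * f t + (c * t + e) * f' t) U := by
      intro y hy
      rw [derivWithin_fun_mul (hlind y).differentiableWithinAt (hfd y hy)]
      have hc : derivWithin (fun t : ℝ => c * t + e) U y = c := by
        simpa using
          (((hasDerivAt_id y).const_mul c).add_const e).hasDerivWithinAt.derivWithin (ud y hy)
      rw [hc]
    have hcd1 : ContDiffOn ℝ n (fun t => c * f t) U := hf.of_succ.const_smul c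
    have hcd2 : ContDiffOn ℝ n (fun t => (c * t + e) * f' t) U :=
      ((hlin.of_le (mod_cast le_top)).contDiffOn).mul hf'
    calc iteratedDerivWithin (n + 1) (fun t => (c * t + e) * f t) U x
        = iteratedDerivWithin n (derivWithin (fun t => (c * t + e) * f t) U) U x :=
          congrFun iteratedDerivWithin_succ' x
      _ = iteratedDerivWithin n (fun t => c * f t + (c * t + e) * f' t) U x :=
          iteratedDerivWithin_congr heq hx
      _ = iteratedDerivWithin n (fun t => c * f t) U x
            + iteratedDerivWithin n (fun t => (c * t + e) * f' t) U x := by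
          have := iteratedDerivWithin_add hx ud (hcd1 x hx) (hcd2 x hx)
          simpa [Pi.add_def] using this
      _ = c * iteratedDerivWithin n f U x
            + ((n : ℝ) * c * iteratedDerivWithin (n - 1) f' U x
              + (c * x + e) * iteratedDerivWithin n f' U x) := by
          rw [iteratedDerivWithin_const_mul hx ud c (hf.of_succ x hx), IH f' hf' x hx]
      _ = ((n + 1 : ℕ) : ℝ) * c * iteratedDerivWithin (n + 1 - 1) f U x
            + (c * x + e) * iteratedDerivWithin (n + 1) f U x := by
          have e1 : iteratedDerivWithin n f' U x = iteratedDerivWithin (n + 1) f U x :=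
            (congrFun iteratedDerivWithin_succ' x).symm
          have e2 : (n : ℝ) * iteratedDerivWithin (n - 1) f' U x
              = (n : ℝ) * iteratedDerivWithin n f U x := by
            rcases Nat.eq_zero_or_pos n with h | h
            · simp [h]
            · congr 1
              rw [show n = (n - 1) + 1 by omega] 
              exact (congrFun iteratedDerivWithin_succ' x).symm
          rw [e1, Nat.add_sub_cancel]
          push_cast
          linear_combination c * e2
  
private lemma key' (c e : ℝ) {U : Set ℝ} (hU : IsOpen U) (n : ℕ) (f : ℝ → ℝ)
    (hf : ContDiffOn ℝ n f U) {x : ℝ} (hx : x ∈ U) :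
    iteratedDeriv n (fun t => (c * t + e) * f t) x
      = (n : ℝ) * c * iteratedDeriv (n - 1) f x + (c * x + e) * iteratedDeriv n f x := by
  rw [← idw_open hU hx, ← idw_open hU hx, ← idw_open hU hx]
  exact key c e hU n f hf x hx

set_option maxHeartbeats 1000000 in
theorem stmt14 (ξ : ℕ → ℝ) (l k : ℕ)
    (h1 : ξ (l + k) ≠ ξ l) (h2 : ξ (l + k + 1) ≠ ξ (l + 1))
    (x : ℝ) (f g F : ℝ → ℝ)
    (hF : ∀ t, F t = ((t - ξ l) / (ξ (l + k) - ξ l)) * f t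
        + ((ξ (l + k + 1) - t) / (ξ (l + k + 1) - ξ (l + 1))) * g t)
    (i : ℕ) (hi : 1 ≤ i)
    (U : Set ℝ) (hU : IsOpen U) (hxU : x ∈ U)
    (hf : ContDiffOn ℝ i f U) (hg : ContDiffOn ℝ i g U) :
    iteratedDeriv i F x
      = ((i : ℝ) / (ξ (l + k) - ξ l)) * iteratedDeriv (i - 1) f x
        + ((x - ξ l) / (ξ (l + k) - ξ l)) * iteratedDeriv i f x
        + ((i : ℝ) / (ξ (l + 1) - ξ (l + k + 1))) * iteratedDeriv (i - 1) g x
        + ((ξ (l + k + 1) - x) / (ξ (l + k + 1) - ξ (l + 1))) * iteratedDeriv i g x := by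
  set d1 := ξ (l + k) - ξ l with hd1
  set d2 := ξ (l + k + 1) - ξ (l + 1) with hd2
  have hd1' : d1 ≠ 0 := sub_ne_zero.mpr h1
  have hd2' : d2 ≠ 0 := sub_ne_zero.mpr h2
  have ud : UniqueDiffOn ℝ U := hU.uniqueDiffOn
  have hFeq : F = fun t => ((1 / d1) * t + (-ξ l / d1)) * f t
      + ((-1 / d2) * t + (ξ (l + k + 1) / d2)) * g t := by
    funext t
    rw [hF t]
    field_simp
    ring
  have hA : ContDiffOn ℝ i (fun t => ((1 / d1) * t + (-ξ l / d1)) * f t) U :=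
    (((contDiff_const.mul contDiff_id).add contDiff_const).contDiffOn).mul hf
  have hB : ContDiffOn ℝ i (fun t => ((-1 / d2) * t + (ξ (l + k + 1) / d2)) * g t) U :=
    (((contDiff_const.mul contDiff_id).add contDiff_const).contDiffOn).mul hg
  rw [hFeq, ← idw_open hU hxU]
  have hadd := iteratedDerivWithin_add hxU ud (hA x hxU) (hB x hxU)
  rw [show (fun t => ((1 / d1) * t + (-ξ l / d1)) * f t
      + ((-1 / d2) * t + (ξ (l + k + 1) / d2)) * g t)
    = (fun t => ((1 / d1) * t + (-ξ l / d1)) * f t)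
      + (fun t => ((-1 / d2) * t + (ξ (l + k + 1) / d2)) * g t) from rfl, hadd,
    idw_open hU hxU, idw_open hU hxU,
    key' (1 / d1) (-ξ l / d1) hU i f hf hxU,
    key' (-1 / d2) (ξ (l + k + 1) / d2) hU i g hg hxU]
  have hd3 : ξ (l + 1) - ξ (l + k + 1) ≠ 0 := by
    rw [show ξ (l + 1) - ξ (l + k + 1) = -d2 by rw [hd2]; ring]
    exact neg_ne_zero.mpr hd2'
  field_simp
  ring
end
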